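/- arXiv:2009.11540 — 5 statements merged into one kernel-verified Lean document; each statement's English description precedes it below -/
import Mathlib

section
/- Let n, p, m be natural numbers, let λ : Fin n → ℂ satisfy Re(λ i) < 0 for all i, and let Φ : Fin n → Matrix (Fin p) (Fin m) ℂ. Define the Hermitian-type matrix Q ∈ Matrix (Fin n) (Fin n) ℂ by Q i j = tr(Φ i · (Φ j)ᴴ) / (−λ i − conj(λ j)). Then for every vector α : Fin n → ℝ, the truncation error satisfies (1/(2π)) · ∫_{ν ∈ ℝ} ‖∑ i, (1 − α i) • ((I·ν − λ i)⁻¹ • Φ i)‖_F² dν = ∑ i, ∑ j, (1 − α i) · (1 − α j) · Q i j, where the double sum on the right is a real number (i.e., the complex double sum equals the coercion of the real-valued integral on the left). -/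
/-!
Writing the squared Frobenius norm as `tr (M * Mᴴ)` turns the integrand into the finite sum of
`tr (Φ i * (Φ j)ᴴ)` weighted by `(iν - λᵢ)⁻¹ * conj (iν - λⱼ)⁻¹`, so everything reduces to the
scalar integral `∫ (iν - z)⁻¹ * conj (iν - w)⁻¹ dν = 2π / (-z - conj w)` for `Re z, Re w < 0`.
By partial fractions this integrand is `(-z - conj w)⁻¹ * ((iν - z)⁻¹ + (-iν - conj w)⁻¹)`, with
primitive `-i log (iν - z) + i log (-iν - conj w)`; both logarithms stay on the right half plane,
where the principal branch is holomorphic, and each contributes `π` as `ν` runs over `[-R, R]`,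
`R → ∞`.
-/

open MeasureTheory Complex Matrix

/-- Squared Frobenius norm of a complex matrix. -/
noncomputable def frobSq {p m : ℕ} (M : Matrix (Fin p) (Fin m) ℂ) : ℝ :=
  ∑ i, ∑ j, ‖M i j‖ ^ 2

open Filter Topology Real

lemma ofReal_frobSq {p m : ℕ} (M : Matrix (Fin p) (Fin m) ℂ) :
    (frobSq M : ℂ) = (M * Mᴴ).trace := by
  simp [frobSq, Matrix.trace, Matrix.mul_apply, ← Complex.mul_conj']

lemma trace_sum_smul_mul_conjTranspose {ι : Type*} [Fintype ι] {p m : ℕ} (z : ι → ℂ)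
    (A : ι → Matrix (Fin p) (Fin m) ℂ) :
    ((∑ i, z i • A i) * (∑ i, z i • A i)ᴴ).trace =
      ∑ i, ∑ j, z i * starRingEnd ℂ (z j) * (A i * (A j)ᴴ).trace := by
  simp only [conjTranspose_sum, conjTranspose_smul, Matrix.sum_mul, Matrix.mul_sum, trace_sum,
    Matrix.smul_mul, Matrix.mul_smul, trace_smul, smul_eq_mul, RCLike.star_def, Finset.mul_sum]
  rw [Finset.sum_comm]
  exact Finset.sum_congr rfl fun i _ => Finset.sum_congr rfl fun j _ => by ring

lemma integral_frobSq_sum_smul {X ι : Type*} [MeasurableSpace X] {μ : Measure X} [Fintype ι]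
    {p m : ℕ} (g : ι → X → ℂ) (A : ι → Matrix (Fin p) (Fin m) ℂ)
    (hg : ∀ i j, Integrable (fun x => g i x * starRingEnd ℂ (g j x)) μ) :
    ((∫ x, frobSq (∑ i, g i x • A i) ∂μ : ℝ) : ℂ) =
      ∑ i, ∑ j, (∫ x, g i x * starRingEnd ℂ (g j x) ∂μ) * (A i * (A j)ᴴ).trace := by
  rw [← integral_complex_ofReal]
  simp_rw [ofReal_frobSq, trace_sum_smul_mul_conjTranspose]
  rw [integral_finsetSum _ fun i _ => integrable_finsetSum _ fun j _ => (hg i j).mul_const _]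
  refine Finset.sum_congr rfl fun i _ => ?_
  rw [integral_finsetSum _ fun j _ => (hg i j).mul_const _]
  simp_rw [integral_mul_const]

lemma integrable_inv_sq_add_sub_sq {a : ℝ} (ha : a ≠ 0) (b : ℝ) :
    Integrable fun x : ℝ => (a ^ 2 + (x - b) ^ 2)⁻¹ := by
  refine ((integrable_inv_one_add_sq.comp_div ha).const_mul (a ^ 2)⁻¹).comp_sub_right b |>.congr
    (.of_eq (funext fun x => ?_))
  field_simp

section ImaginaryAxis

variable {z w : ℂ}

lemma I_mul_ofReal_sub_ne_zero (hz : z.re < 0) (ν : ℝ) : I * ν - z ≠ 0 :=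
  ne_of_apply_ne re (by simpa using hz.ne)

lemma I_mul_ofReal_sub_mem_slitPlane (hz : z.re < 0) (ν : ℝ) : I * ν - z ∈ slitPlane :=
  mem_slitPlane_iff.2 (Or.inl (by simpa using hz))

lemma continuous_inv_I_mul_ofReal_sub (hz : z.re < 0) :
    Continuous fun ν : ℝ => (I * ν - z)⁻¹ :=
  (by fun_prop : Continuous fun ν : ℝ => I * ν - z).inv₀ (I_mul_ofReal_sub_ne_zero hz)

lemma norm_inv_I_mul_ofReal_sub_sq (z : ℂ) (ν : ℝ) :
    ‖(I * ν - z)⁻¹‖ ^ 2 = (z.re ^ 2 + (ν - z.im) ^ 2)⁻¹ := by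
  rw [norm_inv, inv_pow, Complex.sq_norm, normSq_apply]
  simp only [sub_re, sub_im, I_mul_re, I_mul_im, ofReal_re, ofReal_im]
  ring

lemma memLp_two_inv_I_mul_ofReal_sub (hz : z.re < 0) :
    MemLp (fun ν : ℝ => (I * ν - z)⁻¹) 2 := by
  rw [memLp_two_iff_integrable_sq_norm (continuous_inv_I_mul_ofReal_sub hz).aestronglyMeasurable]
  simpa only [norm_inv_I_mul_ofReal_sub_sq] using integrable_inv_sq_add_sub_sq hz.ne z.im

lemma integrable_inv_I_mul_ofReal_sub_mul_conj (hz : z.re < 0) (hw : w.re < 0) :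
    Integrable fun ν : ℝ => (I * ν - z)⁻¹ * starRingEnd ℂ (I * ν - w)⁻¹ :=
  (memLp_two_inv_I_mul_ofReal_sub hz).integrable_mul (memLp_two_inv_I_mul_ofReal_sub hw).star

lemma hasDerivAt_neg_I_mul_log_I_mul_ofReal_sub (hz : z.re < 0) (t : ℝ) :
    HasDerivAt (fun t : ℝ => -I * log (I * t - z)) (I * t - z)⁻¹ t := by
  have h := (((hasDerivAt_id t).ofReal_comp.const_mul I).sub_const z).clog_real
    (I_mul_ofReal_sub_mem_slitPlane hz t) |>.const_mul (-I)
  refine h.congr_deriv ?_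
  rw [id_eq, ofReal_one, mul_one, ← mul_div_assoc, neg_mul, I_mul_I, neg_neg, one_div]

lemma log_mul_ofReal_sub (hz : z.re < 0) {u : ℂ} (hu : u.re = 0) {R : ℝ} (hR : 0 < R) :
    log (u * R - z) = Real.log R + log (u - (R : ℂ)⁻¹ * z) := by
  have hne : u * R - z ≠ 0 := ne_of_apply_ne re (by simpa [hu] using hz.ne)
  have hR0 : (R : ℂ) ≠ 0 := ofReal_ne_zero.2 hR.ne'
  have h : u * R - z = R * (u - (R : ℂ)⁻¹ * z) := by
    field_simp
  rw [h] at hne ⊢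
  exact log_ofReal_mul hR (right_ne_zero_of_mul hne)

lemma tendsto_log_sub_inv_ofReal_mul (z : ℂ) {u : ℂ} (hu : u ∈ slitPlane) :
    Tendsto (fun R : ℝ => log (u - (R : ℂ)⁻¹ * z)) atTop (𝓝 (log u)) := by
  have h : Tendsto (fun R : ℝ => (R : ℂ)⁻¹ * z) atTop (𝓝 0) := by
    simpa using ((continuous_ofReal.tendsto 0).comp tendsto_inv_atTop_zero).mul_const z
  have h' : Tendsto (fun R : ℝ => u - (R : ℂ)⁻¹ * z) atTop (𝓝 u) := by
    simpa using tendsto_const_nhds.sub h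
  exact (continuousAt_clog hu).tendsto.comp h'

lemma tendsto_log_I_mul_ofReal_sub_sub (hz : z.re < 0) :
    Tendsto (fun R : ℝ => log (I * R - z) - log (I * ↑(-R) - z)) atTop (𝓝 (π * I)) := by
  have hlim := (tendsto_log_sub_inv_ofReal_mul z (u := I) (by simp [mem_slitPlane_iff])).sub
    (tendsto_log_sub_inv_ofReal_mul z (u := -I) (by simp [mem_slitPlane_iff]))
  rw [log_I, log_neg_I, show π / 2 * I - -(π / 2) * I = π * I by ring] at hlim
  refine hlim.congr' ?_
  filter_upwards [eventually_gt_atTop 0] with R hR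
  rw [ofReal_neg, mul_neg, ← neg_mul, log_mul_ofReal_sub hz I_re hR,
    log_mul_ofReal_sub hz (by simp) hR]
  ring

lemma inv_I_mul_ofReal_sub_add (hz : z.re < 0) (hw : w.re < 0) (ν : ℝ) :
    (I * ν - z)⁻¹ + (I * ↑(-ν) - w)⁻¹ =
      (-z - w) * ((I * ν - z)⁻¹ * starRingEnd ℂ (I * ν - starRingEnd ℂ w)⁻¹) := by
  have h1 := I_mul_ofReal_sub_ne_zero hz ν
  have h2 : -(I * ν) - w ≠ 0 := by simpa using I_mul_ofReal_sub_ne_zero hw (-ν)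
  rw [map_inv₀, map_sub, conj_conj, _root_.map_mul, conj_I, conj_ofReal, ofReal_neg, mul_neg,
    neg_mul]
  field_simp
  ring

-- Neither summand is integrable on its own; `hint` comes from `inv_I_mul_ofReal_sub_add`.
lemma integral_inv_I_mul_ofReal_sub_add (hz : z.re < 0) (hw : w.re < 0)
    (hint : Integrable fun ν : ℝ => (I * ν - z)⁻¹ + (I * ↑(-ν) - w)⁻¹) :
    ∫ ν : ℝ, ((I * ν - z)⁻¹ + (I * ↑(-ν) - w)⁻¹) = 2 * π := by
  set F : ℝ → ℂ := fun t => -I * log (I * t - z) - -I * log (I * ↑(-t) - w)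
  have hF : ∀ t : ℝ, HasDerivAt F ((I * t - z)⁻¹ + (I * ↑(-t) - w)⁻¹) t := fun t => by
    have hdiff := (hasDerivAt_neg_I_mul_log_I_mul_ofReal_sub hz t).sub
      ((hasDerivAt_neg_I_mul_log_I_mul_ofReal_sub hw (-t)).scomp t (hasDerivAt_neg t))
    exact hdiff.congr_deriv (by simp)
  have hFTC : ∀ R : ℝ, ∫ ν in -R..R, ((I * ν - z)⁻¹ + (I * ↑(-ν) - w)⁻¹) = F R - F (-R) := fun R =>
    intervalIntegral.integral_eq_sub_of_hasDerivAt (fun t _ => hF t) (hint.intervalIntegrable)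
  have hlim : Tendsto (fun R : ℝ => F R - F (-R)) atTop (𝓝 (2 * π)) := by
    have hsum := ((tendsto_log_I_mul_ofReal_sub_sub hz).const_mul (-I)).add
      ((tendsto_log_I_mul_ofReal_sub_sub hw).const_mul (-I))
    rw [show -I * (π * I) + -I * (π * I) = 2 * π by linear_combination (-2 * π : ℂ) * I_sq]
      at hsum
    refine hsum.congr fun R => ?_
    simp only [F, neg_neg]
    ring
  exact tendsto_nhds_unique
    ((intervalIntegral_tendsto_integral hint tendsto_neg_atTop_atBot tendsto_id).congr hFTC) hlim

lemma integral_inv_I_mul_ofReal_sub_mul_conj (hz : z.re < 0) (hw : w.re < 0) :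
    ∫ ν : ℝ, (I * ν - z)⁻¹ * starRingEnd ℂ (I * ν - w)⁻¹ = 2 * π / (-z - starRingEnd ℂ w) := by
  have hw' : (starRingEnd ℂ w).re < 0 := by simpa using hw
  have hc : -z - starRingEnd ℂ w ≠ 0 :=
    ne_of_apply_ne re (by simp only [sub_re, neg_re, conj_re, zero_re]; linarith)
  have hsum := inv_I_mul_ofReal_sub_add hz hw'
  simp only [conj_conj] at hsum
  have h := integral_inv_I_mul_ofReal_sub_add hz hw' <| by
    simpa only [hsum] using (integrable_inv_I_mul_ofReal_sub_mul_conj hz hw).const_mul _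
  simp only [hsum, integral_const_mul] at h
  rw [eq_div_iff hc, ← h, mul_comm]

end ImaginaryAxis

theorem optimal_H2_modal_truncation_quadratic_form
    (n p m : ℕ) (lam : Fin n → ℂ) (hlam : ∀ i, (lam i).re < 0)
    (Φ : Fin n → Matrix (Fin p) (Fin m) ℂ)
    (Q : Matrix (Fin n) (Fin n) ℂ)
    (hQ : ∀ i j, Q i j = (Φ i * (Φ j)ᴴ).trace / (-lam i - (starRingEnd ℂ) (lam j)))
    (α : Fin n → ℝ) :
    ((((1 : ℝ) / (2 * Real.pi)) *
        ∫ ν : ℝ, frobSq (∑ i, (1 - α i) • ((Complex.I * (ν : ℂ) - lam i)⁻¹ • Φ i)) : ℝ) : ℂ) =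
      ∑ i, ∑ j, ((1 - α i : ℝ) : ℂ) * ((1 - α j : ℝ) : ℂ) * Q i j := by
  set c : Fin n → ℂ := fun i => ((1 - α i : ℝ) : ℂ)
  set g : Fin n → ℝ → ℂ := fun i ν => c i * (I * ν - lam i)⁻¹
  have hsmul (ν : ℝ) : ∑ i, (1 - α i) • ((I * ν - lam i)⁻¹ • Φ i) = ∑ i, g i ν • Φ i :=
    Finset.sum_congr rfl fun i _ => by rw [← smul_smul, Complex.coe_smul]
  have hg (i j : Fin n) (ν : ℝ) : g i ν * starRingEnd ℂ (g j ν) =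
      c i * c j * ((I * ν - lam i)⁻¹ * starRingEnd ℂ (I * ν - lam j)⁻¹) := by
    simp only [g, c, _root_.map_mul, conj_ofReal]
    ring
  have hint (i j : Fin n) : Integrable fun ν : ℝ => g i ν * starRingEnd ℂ (g j ν) := by
    simpa only [hg] using
      (integrable_inv_I_mul_ofReal_sub_mul_conj (hlam i) (hlam j)).const_mul (c i * c j)
  simp_rw [hsmul]
  push_cast
  rw [integral_frobSq_sum_smul g Φ hint, Finset.mul_sum]
  refine Finset.sum_congr rfl fun i _ => ?_
  rw [Finset.mul_sum]
  refine Finset.sum_congr rfl fun j _ => ?_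
  simp only [hg, integral_const_mul, integral_inv_I_mul_ofReal_sub_mul_conj (hlam i) (hlam j), hQ]
  field_simp
  push_cast [c]
  ring
end

section
/- Let n, p, m be natural numbers, let λ : Fin n → ℂ satisfy Re(λ i) < 0 for all i, let Φ : Fin n → Matrix (Fin p) (Fin m) ℂ, and let D be a real p × m matrix (viewed as a complex matrix with real entries). Assume there is an involution σ : Fin n → Fin n with σ ∘ σ = id, λ(σ i) = conj(λ i), and Φ(σ i) equal to the entrywise complex conjugate of Φ i, for all i. Let ω > 0, and write H(s) = D + ∑ₖ (s − λ k)⁻¹ • Φ k (well-defined at s = −λ i since Re(−λ i) > 0 > Re(λ k)). Then the coercion to ℂ of the real number (1/(2π)) · ∫_{ν ∈ [−ω, ω]} ‖H(I·ν)‖_F² dν equals (ω/π) · ‖D‖_F² − (2/π) · ∑ i, tr(Φ i · H(−λ i)ᵀ) · atan(ω / λ i). -/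
open MeasureTheory Complex Matrix

/-- Principal-branch complex arctangent. -/
noncomputable def catan (z : ℂ) : ℂ :=
  (1 / (2 * Complex.I)) *
    (Complex.log (1 + Complex.I * z) - Complex.log (1 - Complex.I * z))

/-!
Entrywise, `H` is a scalar pole-residue sum `h(s) = d + ∑ₖ φₖ / (s - λₖ)`, and the involution makes
`conj h(iν) = h(-iν)`, so `|h(iν)|² = h(iν) h(-iν)`. Partial fractions in the double sum give
`h(s) h(-s) = d² + ∑ₖ ((s - λₖ)⁻¹ + (-s - λₖ)⁻¹) φₖ h(-λₖ)`, and on the imaginary axis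
`(iν - λ)⁻¹ + (-iν - λ)⁻¹ = -2λ / (ν² + λ²)` has the odd primitive `-2 atan(ν / λ)`.
-/

open ComplexConjugate

section PoleResidue

variable {K ι : Type*} [Field K] [Fintype ι]

def poleResidueSum (d : K) (lam φ : ι → K) (s : K) : K :=
  d + ∑ k, (s - lam k)⁻¹ * φ k

lemma inv_mul_inv_eq_inv_add_mul {x y : K} (hx : x ≠ 0) (hy : y ≠ 0) (hxy : x + y ≠ 0) :
    x⁻¹ * y⁻¹ = (x + y)⁻¹ * (x⁻¹ + y⁻¹) := by
  field_simp
  ring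

lemma poleResidueSum_mul_poleResidueSum_neg {d s : K} {lam φ : ι → K}
    (hs : ∀ k, s - lam k ≠ 0) (hs' : ∀ k, -s - lam k ≠ 0) (hpoles : ∀ k l, -lam k - lam l ≠ 0) :
    poleResidueSum d lam φ s * poleResidueSum d lam φ (-s) =
      d * d + ∑ k, ((s - lam k)⁻¹ + (-s - lam k)⁻¹) * (φ k * poleResidueSum d lam φ (-lam k)) := by
  have hpf : ∀ k l, (s - lam k)⁻¹ * (-s - lam l)⁻¹ =
      (-lam k - lam l)⁻¹ * ((s - lam k)⁻¹ + (-s - lam l)⁻¹) := fun k l => by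
    rw [inv_mul_inv_eq_inv_add_mul (hs k) (hs' l) (by convert hpoles k l using 1; ring)]
    congr 1
    ring
  have hswap : ∑ k, ∑ l, (-lam k - lam l)⁻¹ * (-s - lam l)⁻¹ * (φ k * φ l) =
      ∑ k, ∑ l, (-lam k - lam l)⁻¹ * (-s - lam k)⁻¹ * (φ k * φ l) := by
    rw [Finset.sum_comm]
    exact Finset.sum_congr rfl fun k _ => Finset.sum_congr rfl fun l _ => by ring
  have hcross : (∑ k, (s - lam k)⁻¹ * φ k) * ∑ l, (-s - lam l)⁻¹ * φ l =
      ∑ k, ((s - lam k)⁻¹ + (-s - lam k)⁻¹) * (φ k * ∑ l, (-lam k - lam l)⁻¹ * φ l) :=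
    calc (∑ k, (s - lam k)⁻¹ * φ k) * ∑ l, (-s - lam l)⁻¹ * φ l
        = ∑ k, ∑ l, (s - lam k)⁻¹ * (-s - lam l)⁻¹ * (φ k * φ l) := by
          rw [Finset.sum_mul_sum]
          exact Finset.sum_congr rfl fun k _ => Finset.sum_congr rfl fun l _ => by ring
      _ = ∑ k, ∑ l, (-lam k - lam l)⁻¹ * (s - lam k)⁻¹ * (φ k * φ l) +
          ∑ k, ∑ l, (-lam k - lam l)⁻¹ * (-s - lam l)⁻¹ * (φ k * φ l) := by
          simp only [hpf, ← Finset.sum_add_distrib]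
          exact Finset.sum_congr rfl fun k _ => Finset.sum_congr rfl fun l _ => by ring
      _ = ∑ k, ((s - lam k)⁻¹ + (-s - lam k)⁻¹) * (φ k * ∑ l, (-lam k - lam l)⁻¹ * φ l) := by
          simp only [hswap, ← Finset.sum_add_distrib, Finset.mul_sum]
          exact Finset.sum_congr rfl fun k _ => Finset.sum_congr rfl fun l _ => by ring
  simp only [poleResidueSum, mul_add, Finset.sum_add_distrib, add_mul, Finset.mul_sum] at hcross ⊢
  rw [hcross, Finset.sum_mul]
  have hd : ∀ k, d * ((-s - lam k)⁻¹ * φ k) = (-s - lam k)⁻¹ * (φ k * d) := fun k => by ring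
  simp only [hd, mul_assoc]
  ring

end PoleResidue

lemma I_mul_ofReal_sub_ne_zero_s5 {lam : ℂ} (hlam : lam.re < 0) (ν : ℝ) : I * ν - lam ≠ 0 := by
  intro h
  have := congrArg re h
  simp at this
  linarith

lemma neg_I_mul_ofReal_sub_ne_zero {lam : ℂ} (hlam : lam.re < 0) (ν : ℝ) :
    -(I * ν) - lam ≠ 0 := by
  simpa [neg_mul] using I_mul_ofReal_sub_ne_zero_s5 hlam (-ν)

lemma one_add_I_mul_div_mem_slitPlane {lam : ℂ} (hlam : lam.re < 0) (ν : ℝ) :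
    1 + I * (ν / lam) ∈ slitPlane := by
  rcases eq_or_ne ν 0 with rfl | hν
  · simp
  refine mem_slitPlane_iff.mpr (Or.inr ?_)
  have hlam0 : lam ≠ 0 := fun h => by simp [h] at hlam
  simp [div_re]
  exact ⟨⟨hν, hlam.ne⟩, hlam0⟩

lemma catan_neg (z : ℂ) : catan (-z) = -catan z := by
  simp only [catan, mul_neg, sub_neg_eq_add, ← sub_eq_add_neg]
  ring

lemma hasDerivAt_catan {z : ℂ} (h₁ : 1 + I * z ∈ slitPlane) (h₂ : 1 - I * z ∈ slitPlane) :
    HasDerivAt catan (1 / (1 + z ^ 2)) z := by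
  have hlog₁ := ((hasDerivAt_id z).const_mul I).const_add 1 |>.clog h₁
  have hlog₂ := ((hasDerivAt_id z).const_mul I).const_sub 1 |>.clog h₂
  have h₁' := slitPlane_ne_zero h₁
  have h₂' := slitPlane_ne_zero h₂
  refine ((hlog₁.sub hlog₂).const_mul (1 / (2 * I))).congr_deriv ?_
  have hfactor : 1 + z ^ 2 = (1 + I * z) * (1 - I * z) := by linear_combination z ^ 2 * I_sq
  rw [hfactor]
  simp only [id]
  field_simp
  ring

lemma hasDerivAt_neg_two_mul_catan_div {lam : ℂ} (hlam : lam.re < 0) (ν : ℝ) :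
    HasDerivAt (fun t : ℝ => -2 * catan (t / lam)) ((I * ν - lam)⁻¹ + (-(I * ν) - lam)⁻¹) ν := by
  have h₁ := one_add_I_mul_div_mem_slitPlane hlam ν
  have h₂ : 1 - I * (ν / lam) ∈ slitPlane := by
    simpa [neg_div, sub_eq_add_neg] using one_add_I_mul_div_mem_slitPlane hlam (-ν)
  refine ((((hasDerivAt_catan h₁ h₂).comp (ν : ℂ)
    ((hasDerivAt_id _).div_const lam)).comp_ofReal).const_mul (-2)).congr_deriv ?_
  have hlam0 : lam ≠ 0 := fun h => by simp [h] at hlam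
  have h₁' := slitPlane_ne_zero h₁
  have h₂' := slitPlane_ne_zero h₂
  have h₃ := I_mul_ofReal_sub_ne_zero_s5 hlam ν
  have h₄ := neg_I_mul_ofReal_sub_ne_zero hlam ν
  have h₃' : lam - I * ν ≠ 0 := fun h => h₃ (by linear_combination -h)
  have h₄' : lam + I * ν ≠ 0 := fun h => h₄ (by linear_combination -h)
  have hfactor : 1 + (ν / lam) ^ 2 = (1 + I * (ν / lam)) * (1 - I * (ν / lam)) := by
    linear_combination (ν / lam) ^ 2 * I_sq
  rw [hfactor]
  field_simp
  ring

lemma integral_inv_add_inv {lam : ℂ} (hlam : lam.re < 0) (ω : ℝ) :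
    ∫ ν in (-ω)..ω, ((I * ν - lam)⁻¹ + (-(I * ν) - lam)⁻¹) = -4 * catan (ω / lam) := by
  have hcont : Continuous fun ν : ℝ => (I * ν - lam)⁻¹ + (-(I * ν) - lam)⁻¹ := by
    fun_prop (disch := first
      | exact I_mul_ofReal_sub_ne_zero_s5 hlam | exact neg_I_mul_ofReal_sub_ne_zero hlam)
  rw [intervalIntegral.integral_eq_sub_of_hasDerivAt
    (fun ν _ => hasDerivAt_neg_two_mul_catan_div hlam ν) (hcont.intervalIntegrable _ _)]
  push_cast
  rw [neg_div, catan_neg]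
  ring

section ComplexPoleResidue

variable {ι : Type*} [Fintype ι]

lemma conj_poleResidueSum {d : ℂ} {lam φ : ι → ℂ} {σ : ι → ι}
    (hσ : Function.Involutive σ) (hlam : ∀ k, lam (σ k) = conj (lam k))
    (hφ : ∀ k, φ (σ k) = conj (φ k)) (hd : conj d = d) (s : ℂ) :
    conj (poleResidueSum d lam φ s) = poleResidueSum d lam φ (conj s) := by
  simp only [poleResidueSum, map_add, map_sum, map_mul, map_inv₀, map_sub, hd]
  rw [← Equiv.sum_comp (hσ.toPerm σ)]
  simp [hlam, hφ]

lemma continuous_poleResidueSum_I_mul {d : ℂ} {lam φ : ι → ℂ} (hlam : ∀ k, (lam k).re < 0) :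
    Continuous fun ν : ℝ => poleResidueSum d lam φ (I * ν) := by
  unfold poleResidueSum
  fun_prop (disch := exact I_mul_ofReal_sub_ne_zero_s5 (hlam _))

lemma integral_poleResidueSum_I_mul_mul_neg {d : ℂ} {lam φ : ι → ℂ}
    (hlam : ∀ k, (lam k).re < 0) (ω : ℝ) :
    ∫ ν in (-ω)..ω, poleResidueSum d lam φ (I * ν) * poleResidueSum d lam φ (-(I * ν)) =
      2 * ω * (d * d) - 4 * ∑ k, φ k * poleResidueSum d lam φ (-lam k) * catan (ω / lam k) := by
  have hpoles : ∀ k l, -lam k - lam l ≠ 0 := fun k l h => by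
    have := congrArg re h
    simp at this
    linarith [hlam k, hlam l]
  have hterm : ∀ k, Continuous fun ν : ℝ => ((I * ν - lam k)⁻¹ + (-(I * ν) - lam k)⁻¹) *
      (φ k * poleResidueSum d lam φ (-lam k)) := fun k => by
    fun_prop (disch := first
      | exact I_mul_ofReal_sub_ne_zero_s5 (hlam k) | exact neg_I_mul_ofReal_sub_ne_zero (hlam k))
  rw [intervalIntegral.integral_congr fun ν _ => poleResidueSum_mul_poleResidueSum_neg
      (fun k => I_mul_ofReal_sub_ne_zero_s5 (hlam k) ν)
      (fun k => neg_I_mul_ofReal_sub_ne_zero (hlam k) ν) hpoles,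
    intervalIntegral.integral_add intervalIntegrable_const
      ((continuous_finsetSum _ fun k _ => hterm k).intervalIntegrable _ _),
    intervalIntegral.integral_const,
    intervalIntegral.integral_finsetSum fun k _ => (hterm k).intervalIntegrable _ _]
  simp only [intervalIntegral.integral_mul_const, integral_inv_add_inv (hlam _)]
  rw [real_smul, Finset.mul_sum, sub_eq_add_neg (2 * (ω : ℂ) * (d * d)), ← Finset.sum_neg_distrib]
  congr 1
  · push_cast
    ring
  · exact Finset.sum_congr rfl fun k _ => by ring

lemma ofReal_integral_norm_sq_poleResidueSum {d : ℝ} {lam φ : ι → ℂ} {σ : ι → ι}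
    (hσ : Function.Involutive σ) (hlamσ : ∀ k, lam (σ k) = conj (lam k))
    (hφσ : ∀ k, φ (σ k) = conj (φ k)) (hlam : ∀ k, (lam k).re < 0) (ω : ℝ) :
    ((∫ ν in (-ω)..ω, ‖poleResidueSum (d : ℂ) lam φ (I * ν)‖ ^ 2 : ℝ) : ℂ) =
      2 * ω * (d * d) - 4 * ∑ k, φ k * poleResidueSum (d : ℂ) lam φ (-lam k) * catan (ω / lam k) := by
  rw [← intervalIntegral.integral_ofReal, ← integral_poleResidueSum_I_mul_mul_neg hlam]
  refine intervalIntegral.integral_congr fun ν _ => ?_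
  rw [ofReal_pow, ← mul_conj', conj_poleResidueSum hσ hlamσ hφσ (conj_ofReal d)]
  simp

end ComplexPoleResidue

lemma intervalIntegral_frobSq {p m : ℕ} {M : ℝ → Matrix (Fin p) (Fin m) ℂ}
    (hM : ∀ i j, Continuous fun ν => M ν i j) (a b : ℝ) :
    ∫ ν in a..b, frobSq (M ν) = ∑ i, ∑ j, ∫ ν in a..b, ‖M ν i j‖ ^ 2 := by
  have hcont : ∀ i j, Continuous fun ν => ‖M ν i j‖ ^ 2 := fun i j => (hM i j).norm.pow 2
  simp only [frobSq]
  rw [intervalIntegral.integral_finsetSum fun i _ =>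
    (continuous_finsetSum _ fun j _ => hcont i j).intervalIntegrable _ _]
  exact Finset.sum_congr rfl fun i _ =>
    intervalIntegral.integral_finsetSum fun j _ => (hcont i j).intervalIntegrable _ _

theorem freq_limited_H2_norm_pole_residue_expression_general
    (n p m : ℕ) (lam : Fin n → ℂ) (hlam : ∀ i, (lam i).re < 0)
    (Φ : Fin n → Matrix (Fin p) (Fin m) ℂ)
    (D : Matrix (Fin p) (Fin m) ℝ)
    (σ : Fin n → Fin n) (hsigsig : σ ∘ σ = id)
    (hsiglam : ∀ i, lam (σ i) = (starRingEnd ℂ) (lam i))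
    (hsigPhi : ∀ i, Φ (σ i) = (Φ i).map (starRingEnd ℂ))
    (ω : ℝ)
    (H : ℂ → Matrix (Fin p) (Fin m) ℂ)
    (hH : ∀ s, H s = D.map (fun x => (x : ℂ)) + ∑ k, (s - lam k)⁻¹ • Φ k) :
    ((((1 : ℝ) / (2 * Real.pi)) *
        ∫ ν in (-ω)..ω, frobSq (H (Complex.I * (ν : ℂ))) : ℝ) : ℂ) =
      ((ω / Real.pi : ℝ) : ℂ) * ((frobSq (D.map (fun x => (x : ℂ))) : ℝ) : ℂ) -
        ((2 / Real.pi : ℝ) : ℂ) *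
          ∑ i, (Φ i * (H (-lam i))ᵀ).trace * catan ((ω : ℂ) / lam i) := by
  set h := fun i j => poleResidueSum (D i j : ℂ) lam (fun k => Φ k i j)
  have hentry : ∀ s i j, H s i j = h i j s := fun s i j => by
    simp [hH, h, poleResidueSum, Matrix.sum_apply]
  have hentry_integral : ∀ i j, ((∫ ν in (-ω)..ω, ‖H (I * ν) i j‖ ^ 2 : ℝ) : ℂ) =
      2 * ω * (D i j * D i j) - 4 * ∑ k, Φ k i j * h i j (-lam k) * catan (ω / lam k) := by
    simp only [hentry]
    exact fun i j => ofReal_integral_norm_sq_poleResidueSum (σ := σ) (congrFun hsigsig)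
      hsiglam (fun k => by rw [hsigPhi]; rfl) hlam ω
  have htrace : ∀ k, (Φ k * (H (-lam k))ᵀ).trace = ∑ i, ∑ j, Φ k i j * h i j (-lam k) :=
    fun k => by simp [← Matrix.sum_hadamard_eq, hentry]
  have hswap : ∑ k, (∑ i, ∑ j, Φ k i j * h i j (-lam k)) * catan (ω / lam k) =
      ∑ i, ∑ j, ∑ k, Φ k i j * h i j (-lam k) * catan (ω / lam k) := by
    simp only [Finset.sum_mul]
    rw [Finset.sum_comm]
    exact Finset.sum_congr rfl fun i _ => Finset.sum_comm
  rw [intervalIntegral_frobSq fun i j => by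
    simpa only [hentry] using continuous_poleResidueSum_I_mul hlam]
  simp only [ofReal_mul, ofReal_sum, hentry_integral, htrace, hswap, frobSq, Matrix.map_apply,
    norm_real, Real.norm_eq_abs, sq_abs, ofReal_pow, Finset.sum_sub_distrib, ← Finset.mul_sum]
  have hπ : (Real.pi : ℂ) ≠ 0 := ofReal_ne_zero.mpr Real.pi_ne_zero
  push_cast
  field_simp
  ring

theorem freq_limited_H2_norm_pole_residue_expression
    (n p m : ℕ) (lam : Fin n → ℂ) (hlam : ∀ i, (lam i).re < 0)
    (Φ : Fin n → Matrix (Fin p) (Fin m) ℂ)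
    (D : Matrix (Fin p) (Fin m) ℝ)
    (σ : Fin n → Fin n) (hsigsig : σ ∘ σ = id)
    (hsiglam : ∀ i, lam (σ i) = (starRingEnd ℂ) (lam i))
    (hsigPhi : ∀ i, Φ (σ i) = (Φ i).map (starRingEnd ℂ))
    (ω : ℝ) (hω : 0 < ω)
    (H : ℂ → Matrix (Fin p) (Fin m) ℂ)
    (hH : ∀ s, H s = D.map (fun x => (x : ℂ)) + ∑ k, (s - lam k)⁻¹ • Φ k) :
    ((((1 : ℝ) / (2 * Real.pi)) *
        ∫ ν in (-ω)..ω, frobSq (H (Complex.I * (ν : ℂ))) : ℝ) : ℂ) =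
      ((ω / Real.pi : ℝ) : ℂ) * ((frobSq (D.map (fun x => (x : ℂ))) : ℝ) : ℂ) -
        ((2 / Real.pi : ℝ) : ℂ) *
          ∑ i, (Φ i * (H (-lam i))ᵀ).trace * catan ((ω : ℂ) / lam i) :=
  freq_limited_H2_norm_pole_residue_expression_general n p m lam hlam Φ D σ hsigsig hsiglam hsigPhi
    ω H hH
end

section
/- Let E be a finite index set, let λ : E → ℂ satisfy Re(λ i) < 0 for all i, let Φ : E → Matrix (Fin p) (Fin m) ℂ, and let τ > 0. Then Real.sqrt(∫_{t ∈ [0, τ]} ‖∑_{i ∈ E} exp(λ i · t) • Φ i‖_F² dt) ≤ ∑_{i ∈ E} (‖Φ i‖_F / Real.sqrt(−2 · Re(λ i))) · Real.sqrt(1 − Real.exp(2 · Re(λ i) · τ)). -/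
open MeasureTheory Complex Matrix

/-- Frobenius norm of a complex matrix. -/
noncomputable def frobNorm {p m : ℕ} (M : Matrix (Fin p) (Fin m) ℂ) : ℝ :=
  Real.sqrt (frobSq M)

/-!
Put the Frobenius norm on matrices, so that the integrand is `‖∑ i, hᵢ t‖²` with
`hᵢ t = exp (λᵢ t) • Φᵢ`. The left-hand side is then the `L²(0, τ)` norm of `∑ i, hᵢ`, and
Minkowski's inequality bounds it by `∑ i, ‖hᵢ‖_{L²(0, τ)}`. Each summand is computed exactly:
`‖hᵢ t‖² = exp (2 Re λᵢ t) ‖Φᵢ‖²`, whose integral over `[0, τ]` is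
`‖Φᵢ‖² (1 - exp (2 Re λᵢ τ)) / (-2 Re λᵢ)`.
-/

attribute [local instance] Matrix.frobeniusNormedAddCommGroup Matrix.frobeniusNormedSpace

lemma frobSq_eq_norm_sq {p m : ℕ} (M : Matrix (Fin p) (Fin m) ℂ) : frobSq M = ‖M‖ ^ 2 := by
  rw [frobenius_norm_def, ← Real.sqrt_eq_rpow, Real.sq_sqrt (by positivity), frobSq]
  simp only [Real.rpow_two]

lemma frobNorm_eq_norm {p m : ℕ} (M : Matrix (Fin p) (Fin m) ℂ) : frobNorm M = ‖M‖ := by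
  rw [frobNorm, frobSq_eq_norm_sq, Real.sqrt_sq (norm_nonneg M)]

section

variable {α F : Type*} [MeasurableSpace α] {μ : Measure α} [NormedAddCommGroup F]

theorem MeasureTheory.MemLp.toReal_eLpNorm_two {f : α → F} (hf : MemLp f 2 μ) :
    (eLpNorm f 2 μ).toReal = √(∫ a, ‖f a‖ ^ 2 ∂μ) := by
  rw [hf.eLpNorm_eq_integral_rpow_norm two_ne_zero ENNReal.ofNat_ne_top,
    ENNReal.toReal_ofReal (by positivity), Real.sqrt_eq_rpow]
  simp

theorem sqrt_integral_norm_sum_sq_le {ι : Type*} (s : Finset ι) {f : ι → α → F}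
    (hf : ∀ i ∈ s, MemLp (f i) 2 μ) :
    √(∫ a, ‖∑ i ∈ s, f i a‖ ^ 2 ∂μ) ≤ ∑ i ∈ s, √(∫ a, ‖f i a‖ ^ 2 ∂μ) := by
  have hfin : ∀ i ∈ s, eLpNorm (f i) 2 μ ≠ ⊤ := fun i hi => (hf i hi).eLpNorm_ne_top
  calc √(∫ a, ‖∑ i ∈ s, f i a‖ ^ 2 ∂μ) = (eLpNorm (∑ i ∈ s, f i) 2 μ).toReal := by
        rw [(memLp_finsetSum' s hf).toReal_eLpNorm_two]
        simp only [Finset.sum_apply]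
    _ ≤ (∑ i ∈ s, eLpNorm (f i) 2 μ).toReal :=
        ENNReal.toReal_mono (ENNReal.sum_ne_top.2 hfin)
          (eLpNorm_sum_le (fun i hi => (hf i hi).aestronglyMeasurable) one_le_two)
    _ = ∑ i ∈ s, √(∫ a, ‖f i a‖ ^ 2 ∂μ) := by
        rw [ENNReal.toReal_sum hfin]
        exact Finset.sum_congr rfl fun i hi => (hf i hi).toReal_eLpNorm_two

end

theorem integral_exp_mul {c : ℝ} (hc : c ≠ 0) (a b : ℝ) :
    ∫ x in a..b, Real.exp (c * x) = (Real.exp (c * b) - Real.exp (c * a)) / c := by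
  rw [intervalIntegral.integral_comp_mul_left (fun x => Real.exp x) hc, integral_exp,
    smul_eq_mul, inv_mul_eq_div]

section

variable {V : Type*} [NormedAddCommGroup V] [NormedSpace ℂ V]

theorem norm_cexp_mul_smul_sq (z : ℂ) (t : ℝ) (v : V) :
    ‖Complex.exp (z * t) • v‖ ^ 2 = Real.exp (2 * z.re * t) * ‖v‖ ^ 2 := by
  rw [norm_smul, Complex.norm_exp, Complex.re_mul_ofReal, mul_pow, ← Real.exp_nat_mul]
  ring_nf

theorem integral_norm_cexp_mul_smul_sq {z : ℂ} (hz : z.re ≠ 0) (a b : ℝ) (v : V) :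
    ∫ t in a..b, ‖Complex.exp (z * t) • v‖ ^ 2 =
      ‖v‖ ^ 2 * ((Real.exp (2 * z.re * b) - Real.exp (2 * z.re * a)) / (2 * z.re)) := by
  simp_rw [norm_cexp_mul_smul_sq, intervalIntegral.integral_mul_const,
    integral_exp_mul (mul_ne_zero two_ne_zero hz)]
  ring

theorem memLp_two_cexp_mul_smul_restrict_Ioc (z : ℂ) (a b : ℝ) (v : V) :
    MemLp (fun t : ℝ => Complex.exp (z * t) • v) 2 (volume.restrict (Set.Ioc a b)) := by
  have hcont : Continuous fun t : ℝ => Complex.exp (z * t) • v := by fun_prop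
  exact (memLp_two_iff_integrable_sq_norm hcont.aestronglyMeasurable).2
    (hcont.norm.pow 2).integrableOn_Ioc

theorem sqrt_integral_norm_cexp_mul_smul_sq {z : ℂ} (hz : z.re < 0) (τ : ℝ) (v : V) :
    √(∫ t in (0 : ℝ)..τ, ‖Complex.exp (z * t) • v‖ ^ 2) =
      ‖v‖ / √(-2 * z.re) * √(1 - Real.exp (2 * z.re * τ)) := by
  rw [integral_norm_cexp_mul_smul_sq hz.ne, mul_zero, Real.exp_zero,
    ← neg_div_neg_eq, neg_sub, Real.sqrt_mul (sq_nonneg _), Real.sqrt_sq (norm_nonneg v),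
    Real.sqrt_div' _ (by linarith), neg_mul]
  ring

end

theorem time_limited_h2_truncation_error_bound
    (E : Type*) [Fintype E] (p m : ℕ)
    (lam : E → ℂ) (hlam : ∀ i, (lam i).re < 0)
    (Φ : E → Matrix (Fin p) (Fin m) ℂ) (τ : ℝ) (hτ : 0 < τ) :
    Real.sqrt (∫ t in (0 : ℝ)..τ,
        frobSq (∑ i, Complex.exp (lam i * (t : ℂ)) • Φ i)) ≤
      ∑ i, (frobNorm (Φ i) / Real.sqrt (-2 * (lam i).re)) *
        Real.sqrt (1 - Real.exp (2 * (lam i).re * τ)) := by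
  calc √(∫ t in (0 : ℝ)..τ, frobSq (∑ i, Complex.exp (lam i * t) • Φ i))
      = √(∫ t in Set.Ioc 0 τ, ‖∑ i, Complex.exp (lam i * t) • Φ i‖ ^ 2) := by
        simp_rw [frobSq_eq_norm_sq, intervalIntegral.integral_of_le hτ.le]
    _ ≤ ∑ i, √(∫ t in Set.Ioc 0 τ, ‖Complex.exp (lam i * t) • Φ i‖ ^ 2) :=
        sqrt_integral_norm_sum_sq_le _ fun i _ => memLp_two_cexp_mul_smul_restrict_Ioc _ _ _ _
    _ = _ := by
        simp_rw [← intervalIntegral.integral_of_le hτ.le,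
          sqrt_integral_norm_cexp_mul_smul_sq (hlam _), frobNorm_eq_norm]
end

section
/- Let λ ∈ ℂ with Re(λ) < 0, let Φ be a complex p × m matrix, and let ω > 0. Then (1/(2π)) · ∫_{ν ∈ [−ω, ω]} ‖(I·ν − λ)⁻¹ • Φ‖_F² dν = (‖Φ‖_F² / (−2 · Re(λ))) · (−(2/π) · Re(atan(ω / λ))). -/
open MeasureTheory Complex Matrix

/-!
With `λ = -c + b i` (`c > 0`), the integrand is `‖Φ‖² / (c² + (ν - b)²)`, whose primitive is
`arctan ((ν - b) / c) / c`. On the other side, `Re (atan z) = (arg (1 + i z) - arg (1 - i z)) / 2`,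
and for `z = ω / λ` the two arguments are those of `(-λ ∓ i ω) / (-λ)`, quotients of points of the
right half-plane; there `arg` is additive and `arg w = arctan (Im w / Re w)`, which produces the
same two arctangents.
-/

theorem frobSq_smul {p m : ℕ} (s : ℂ) (Φ : Matrix (Fin p) (Fin m) ℂ) :
    frobSq (s • Φ) = ‖s‖ ^ 2 * frobSq Φ := by
  simp only [frobSq, Matrix.smul_apply, smul_eq_mul, norm_mul, mul_pow, Finset.mul_sum]

namespace Complex

theorem arg_eq_arctan_of_re_pos {z : ℂ} (hz : 0 < z.re) :
    arg z = Real.arctan (z.im / z.re) := by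
  obtain ⟨hlo, hhi⟩ := abs_lt.1 (abs_arg_lt_pi_div_two_iff.2 (Or.inl hz))
  exact (Real.arctan_eq_of_tan_eq (tan_arg z) ⟨hlo, hhi⟩).symm

theorem arg_div_of_re_pos {u v : ℂ} (hu : 0 < u.re) (hv : 0 < v.re) :
    arg (u / v) = arg u - arg v := by
  have hu0 : u ≠ 0 := fun h => by simp [h] at hu
  have hv0 : v ≠ 0 := fun h => by simp [h] at hv
  obtain ⟨hu₁, hu₂⟩ := abs_lt.1 (abs_arg_lt_pi_div_two_iff.2 (Or.inl hu))
  obtain ⟨hv₁, hv₂⟩ := abs_lt.1 (abs_arg_lt_pi_div_two_iff.2 (Or.inl hv))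
  rw [← arg_coe_angle_toReal_eq_arg, arg_div_coe_angle hu0 hv0, ← Real.Angle.coe_sub,
    Real.Angle.toReal_coe_eq_self_iff]
  constructor <;> linarith

end Complex

theorem re_catan (z : ℂ) : (catan z).re = (arg (1 + I * z) - arg (1 - I * z)) / 2 := by
  have h : (1 / (2 * I) : ℂ) = -(I / 2) := by field_simp; simp
  simp [catan, h, log_im, mul_re, div_eq_inv_mul]

theorem re_catan_ofReal_div {lam : ℂ} (hlam : lam.re < 0) (ω : ℝ) :
    (catan ((ω : ℂ) / lam)).re =
      -(Real.arctan ((ω - lam.im) / -lam.re) + Real.arctan ((ω + lam.im) / -lam.re)) / 2 := by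
  have hlam0 : lam ≠ 0 := fun h => by simp [h] at hlam
  have hplus : 1 + I * (ω / lam) = (-lam - I * ω) / -lam := by field_simp; ring
  have hminus : 1 - I * (ω / lam) = (-lam + I * ω) / -lam := by field_simp; ring
  have hre₁ : 0 < (-lam - I * ω).re := by simpa using hlam
  have hre₂ : 0 < (-lam + I * ω).re := by simpa using hlam
  have hre₃ : 0 < (-lam).re := by simpa using hlam
  rw [re_catan, hplus, hminus, arg_div_of_re_pos hre₁ hre₃, arg_div_of_re_pos hre₂ hre₃,
    arg_eq_arctan_of_re_pos hre₁, arg_eq_arctan_of_re_pos hre₂]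
  have hslope₁ : (-lam - I * ω).im / (-lam - I * ω).re = -((ω + lam.im) / -lam.re) := by
    simp only [sub_im, neg_im, mul_im, I_re, ofReal_im, mul_zero, I_im, ofReal_re, one_mul,
      zero_add, sub_re, neg_re, mul_re, zero_mul, sub_self, sub_zero]
    ring
  have hslope₂ : (-lam + I * ω).im / (-lam + I * ω).re = (ω - lam.im) / -lam.re := by
    simp only [add_im, neg_im, mul_im, I_re, ofReal_im, mul_zero, I_im, ofReal_re, one_mul,
      zero_add, add_re, neg_re, mul_re, zero_mul, sub_self, add_zero]
    ring
  rw [hslope₁, hslope₂, Real.arctan_neg]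
  ring

theorem integral_inv_sq_add_sq_sub {c : ℝ} (hc : c ≠ 0) (b α β : ℝ) :
    ∫ ν in α..β, (c ^ 2 + (ν - b) ^ 2)⁻¹ =
      (Real.arctan ((β - b) / c) - Real.arctan ((α - b) / c)) / c := by
  have hderiv : ∀ ν : ℝ, HasDerivAt (fun ν : ℝ => Real.arctan ((ν - b) / c) / c)
      (c ^ 2 + (ν - b) ^ 2)⁻¹ ν := by
    intro ν
    have hlin : HasDerivAt (fun ν : ℝ => (ν - b) / c) (1 / c) ν := by
      simpa using ((hasDerivAt_id ν).sub_const b).div_const c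
    refine (((Real.hasDerivAt_arctan _).comp ν hlin).div_const c).congr_deriv ?_
    field_simp
  have hne : ∀ ν : ℝ, c ^ 2 + (ν - b) ^ 2 ≠ 0 := fun ν => by positivity
  rw [intervalIntegral.integral_eq_sub_of_hasDerivAt (fun ν _ => hderiv ν)
    ((Continuous.inv₀ (by fun_prop) hne).intervalIntegrable _ _)]
  ring

theorem frobSq_resolvent_smul (lam : ℂ) {p m : ℕ} (Φ : Matrix (Fin p) (Fin m) ℂ) (ν : ℝ) :
    frobSq ((I * (ν : ℂ) - lam)⁻¹ • Φ) = ((-lam.re) ^ 2 + (ν - lam.im) ^ 2)⁻¹ * frobSq Φ := by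
  rw [frobSq_smul, norm_inv, inv_pow, Complex.sq_norm, normSq_apply]
  congr 2
  simp only [sub_re, mul_re, I_re, ofReal_re, zero_mul, I_im, ofReal_im, mul_zero, sub_self,
    zero_sub, sub_im, mul_im, one_mul, zero_add]
  ring

theorem freq_limited_H2_norm_single_mode_general
    (p m : ℕ) (lam : ℂ) (hlam : lam.re < 0) (Φ : Matrix (Fin p) (Fin m) ℂ)
    (ω : ℝ) :
    ((1 : ℝ) / (2 * Real.pi)) *
        (∫ ν in (-ω)..ω, frobSq ((Complex.I * (ν : ℂ) - lam)⁻¹ • Φ)) =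
      (frobSq Φ / (-2 * lam.re)) * (-(2 / Real.pi) * (catan ((ω : ℂ) / lam)).re) := by
  have hc : -lam.re ≠ 0 := by linarith
  simp_rw [frobSq_resolvent_smul]
  rw [intervalIntegral.integral_mul_const, integral_inv_sq_add_sq_sub hc,
    re_catan_ofReal_div hlam, show (-ω - lam.im) / -lam.re = -((ω + lam.im) / -lam.re) by ring,
    Real.arctan_neg]
  field_simp
  ring

theorem freq_limited_H2_norm_single_mode
    (p m : ℕ) (lam : ℂ) (hlam : lam.re < 0) (Φ : Matrix (Fin p) (Fin m) ℂ)
    (ω : ℝ) (hω : 0 < ω) :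
    ((1 : ℝ) / (2 * Real.pi)) *
        (∫ ν in (-ω)..ω, frobSq ((Complex.I * (ν : ℂ) - lam)⁻¹ • Φ)) =
      (frobSq Φ / (-2 * lam.re)) * (-(2 / Real.pi) * (catan ((ω : ℂ) / lam)).re) :=
  freq_limited_H2_norm_single_mode_general p m lam hlam Φ ω
end

section
/- Let n, p, m be natural numbers, let λ : Fin n → ℂ satisfy Re(λ i) < 0 for all i, and let Φ : Fin n → Matrix (Fin p) (Fin m) ℂ. Define Q ∈ Matrix (Fin n) (Fin n) ℂ by Q i j = tr(Φ i · (Φ j)ᴴ) / (−λ i − conj(λ j)). Then Q is Hermitian and positive semidefinite: Qᴴ = Q, and for every x : Fin n → ℂ, the quadratic form xᴴ Q x is a nonnegative real number. -/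
/-!
`Q` is the Hadamard product of the Gram matrix `tr(Φᵢ Φⱼᴴ)` of the `Φᵢ` for the Frobenius inner
product with the matrix `1 / (-λᵢ - conj λⱼ)`. The latter is the Gram matrix in `L²(0, ∞)` of the
functions `t ↦ exp (conj λᵢ t)`, since `∫₀^∞ exp ((λᵢ + conj λⱼ) t) dt = 1 / (-λᵢ - conj λⱼ)`.
Both factors are positive semidefinite, hence so is `Q` by the Schur product theorem.
-/

open Complex Matrix MeasureTheory Set
open scoped ComplexOrder ComplexConjugate InnerProductSpace

theorem MeasureTheory.MemLp.inner_toLp {α 𝕜 E : Type*} [RCLike 𝕜] [MeasurableSpace α]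
    {μ : Measure α} [NormedAddCommGroup E] [InnerProductSpace 𝕜 E] {f g : α → E}
    (hf : MemLp f 2 μ) (hg : MemLp g 2 μ) :
    ⟪hf.toLp f, hg.toLp g⟫_𝕜 = ∫ x, ⟪f x, g x⟫_𝕜 ∂μ := by
  rw [L2.inner_def]
  refine integral_congr_ae ?_
  filter_upwards [hf.coeFn_toLp, hg.coeFn_toLp] with x hfx hgx
  rw [hfx, hgx]

theorem memLp_two_cexp_mul_Ioi {c : ℂ} (hc : c.re < 0) :
    MemLp (fun t : ℝ => cexp (c * t)) 2 (volume.restrict (Ioi 0)) := by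
  have hcont : Continuous fun t : ℝ => cexp (c * t) := by fun_prop
  refine (memLp_two_iff_integrable_sq_norm hcont.aestronglyMeasurable).mpr ?_
  refine (integrableOn_exp_mul_Ioi (a := 2 * c.re) (by linarith) 0).congr
    (ae_of_all _ fun t => ?_)
  dsimp only
  rw [Complex.norm_exp, re_mul_ofReal, ← Real.exp_nat_mul]
  ring_nf

namespace Matrix

theorem posSemidef_trace_mul_conjTranspose {ι m n R : Type*} [Finite ι] [Fintype m] [Fintype n] [Ring R]
    [PartialOrder R] [StarRing R] [StarOrderedRing R] (A : ι → Matrix m n R) :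
    (of fun i j => (A i * (A j)ᴴ).trace).PosSemidef := by
  convert posSemidef_self_mul_conjTranspose (of fun i (k : m × n) => A i k.1 k.2)
  ext i j
  simp [trace, mul_apply, Fintype.sum_prod_type]

theorem posSemidef_inv_neg_sub_conj {ι : Type*} [Finite ι] (lam : ι → ℂ)
    (hlam : ∀ i, (lam i).re < 0) :
    (of fun i j => (-lam i - conj (lam j))⁻¹).PosSemidef := by
  have hmem i := memLp_two_cexp_mul_Ioi (c := conj (lam i)) (by simpa using hlam i)
  suffices of (fun i j => (-lam i - conj (lam j))⁻¹) = gram ℂ fun i => (hmem i).toLp from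
    this ▸ posSemidef_gram ℂ _
  ext i j
  have hre : (lam i + conj (lam j)).re < 0 := by simpa using add_neg (hlam i) (hlam j)
  rw [of_apply, gram_apply, MemLp.inner_toLp]
  simp only [RCLike.inner_apply', ← Complex.exp_conj, map_mul, conj_conj, conj_ofReal,
    ← Complex.exp_add, ← add_mul]
  rw [integral_exp_mul_complex_Ioi hre, ofReal_zero, mul_zero, Complex.exp_zero, neg_div,
    one_div, ← inv_neg, neg_add']

end Matrix

theorem Q_matrix_hermitian_posSemidef
    (n p m : ℕ) (lam : Fin n → ℂ) (hlam : ∀ i, (lam i).re < 0)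
    (Φ : Fin n → Matrix (Fin p) (Fin m) ℂ)
    (Q : Matrix (Fin n) (Fin n) ℂ)
    (hQ : ∀ i j, Q i j = (Φ i * (Φ j)ᴴ).trace / (-lam i - (starRingEnd ℂ) (lam j))) :
    Qᴴ = Q ∧ Q.PosSemidef := by
  have hQ_hadamard : Q = (of fun i j => (Φ i * (Φ j)ᴴ).trace) ⊙
      of fun i j => (-lam i - conj (lam j))⁻¹ := by
    ext i j
    rw [hQ, hadamard_apply, of_apply, of_apply, div_eq_mul_inv]
  have hQ_psd : Q.PosSemidef := hQ_hadamard ▸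
    (posSemidef_trace_mul_conjTranspose Φ).hadamard (posSemidef_inv_neg_sub_conj lam hlam)
  exact ⟨hQ_psd.isHermitian, hQ_psd⟩
end
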